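/- arXiv:1902.05321 — 7 statements merged into one kernel-verified Lean document; each statement's English description precedes it below -/
import Mathlib

section
/- For every integer n, the constant Laurent polynomial n lies in the ideal of ℤ[t^{±1}] generated by t−2 and 2t−1 if and only if 3 divides n. In other words, the intersection of the ideal (t−2, 2t−1) ⊆ ℤ[t^{±1}] with the image of ℤ (the constants) is exactly the multiples of 3. -/
open LaurentPolynomial

local notation "R" => LaurentPolynomial ℤ

noncomputable def tL : LaurentPolynomial ℤ := LaurentPolynomial.T 1

/-!
Eliminating `t` between the two linear generators gives `2 (t - 2) - (2t - 1) = -3`, their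
resultant, so `3` lies in the ideal. Conversely, `t ↦ 2 = -1` is a ring homomorphism
`ℤ[t^{±1}] → ℤ/3` (as `-1` is a unit) killing both generators, so every integer in the ideal
vanishes mod `3`.
-/

theorem mul_sub_mul_mem_span_pair {A : Type*} [CommRing A] (x a b c d : A) :
    a * d - b * c ∈ Ideal.span {a * x - b, c * x - d} := by
  have h : a * d - b * c = c * (a * x - b) - a * (c * x - d) := by ring
  rw [h]
  exact sub_mem (Ideal.mul_mem_left _ _ (Ideal.subset_span (by simp)))
    (Ideal.mul_mem_left _ _ (Ideal.subset_span (by simp)))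

theorem three_mem_span_tL : (3 : R) ∈ (Ideal.span {tL - 2, 2 * tL - 1} : Ideal R) := by
  have h := mul_sub_mul_mem_span_pair tL 1 2 2 1
  have resultant : (1 : R) * 1 - 2 * 2 = -3 := by norm_num
  rwa [one_mul, resultant, neg_mem_iff] at h

theorem span_tL_le_ker_eval₂_neg_one :
    (Ideal.span {tL - 2, 2 * tL - 1} : Ideal R) ≤
      RingHom.ker (eval₂ (Int.castRingHom (ZMod 3)) (-1)) := by
  have h : eval₂ (Int.castRingHom (ZMod 3)) (-1) tL = -1 := by simp [tL]
  rw [Ideal.span_le, Set.pair_subset_iff]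
  constructor <;> simp only [SetLike.mem_coe, RingHom.mem_ker, map_sub, map_mul, map_ofNat,
    map_one, h] <;> decide

theorem constant_in_span_t_sub_two_two_t_sub_one_iff_three_dvd (n : ℤ) :
    (n : R) ∈ (Ideal.span {tL - 2, 2 * tL - 1} : Ideal R) ↔ (3 : ℤ) ∣ n := by
  constructor
  · intro hn
    have h := span_tL_le_ker_eval₂_neg_one hn
    rw [RingHom.mem_ker, map_intCast] at h
    exact (ZMod.intCast_zmod_eq_zero_iff_dvd n 3).mp h
  · rintro ⟨k, rfl⟩
    rw [Int.cast_mul, Int.cast_ofNat]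
    exact Ideal.mul_mem_right _ _ three_mem_span_tL
end

section
/- Let M be a module over ℤ[t^{±1}] and let P ⊆ M be a submodule such that either (P is isomorphic to ℤ[t^{±1}]/(2t−1) and M/P is isomorphic to ℤ[t^{±1}]/(t−2)) or (P is isomorphic to ℤ[t^{±1}]/(t−2) and M/P is isomorphic to ℤ[t^{±1}]/(2t−1)), all isomorphisms being of ℤ[t^{±1}]-modules. Then M is isomorphic as a ℤ[t^{±1}]-module either to ℤ[t^{±1}]/(t−2) ⊕ ℤ[t^{±1}]/(2t−1) or to ℤ[t^{±1}]/((t−2)(2t−1)). -/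
open LaurentPolynomial

local notation "R" => LaurentPolynomial ℤ

/-!
Let `p` generate `P ≅ A/(a)` and let `m` lift the generator of `M/P ≅ A/(b)`. Then
`b • m = c • p` for some `c`, and since `a • p = 0`, replacing `m` by `m - y • p` moves `c`
through its whole class modulo `(a, b)`. If that class is `0`, some lift satisfies `b • m = 0` and
splits the sequence. If it is the class of a unit `u`, some lift satisfies `b • m = u • p`; then
`p = u⁻¹ b • m` lies in `A ∙ m`, so `m` generates `M`, with annihilator `(a * b)`.

For `a, b = t - 2, 2t - 1` we have `t ≡ 2`, `3 ≡ 0` and so `t ≡ -1` modulo `(a, b)`; hence every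
Laurent polynomial is congruent to an integer, and so to `0` or to one of the units `±1`.
-/

section Extension

variable {A N M : Type*} [CommRing A] [AddCommGroup N] [Module A N] [AddCommGroup M]
  [Module A M]

lemma smul_symm_one_eq_zero_iff {I : Ideal A} (e : N ≃ₗ[A] A ⧸ I) (r : A) :
    r • e.symm 1 = 0 ↔ r ∈ I := by
  rw [← map_smul, LinearEquiv.map_eq_zero_iff, Algebra.smul_def, mul_one,
    Ideal.Quotient.algebraMap_eq, Ideal.Quotient.eq_zero_iff_mem]

lemma exists_smul_symm_one_eq {I : Ideal A} (e : N ≃ₗ[A] A ⧸ I) (x : N) :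
    ∃ r : A, r • e.symm 1 = x := by
  obtain ⟨r, hr⟩ := Ideal.Quotient.mk_surjective (e x)
  refine ⟨r, ?_⟩
  rw [← map_smul, Algebra.smul_def, mul_one, Ideal.Quotient.algebraMap_eq, hr,
    e.symm_apply_apply]

variable {P : Submodule A M} {a b : A}

lemma smul_coe_symm_one_eq_zero_iff {I : Ideal A} (e : P ≃ₗ[A] A ⧸ I) (r : A) :
    r • (e.symm 1 : M) = 0 ↔ r ∈ I := by
  rw [← Submodule.coe_smul, ZeroMemClass.coe_eq_zero, smul_symm_one_eq_zero_iff]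

lemma exists_mk_eq_and_smul_eq (e : P ≃ₗ[A] A ⧸ Ideal.span {a})
    (f : (M ⧸ P) ≃ₗ[A] A ⧸ Ideal.span {b}) :
    ∃ c₀ : A, ∀ c : A, c₀ - c ∈ Ideal.span {a, b} →
      ∃ m : M, Submodule.Quotient.mk m = f.symm 1 ∧ b • m = c • (e.symm 1 : M) := by
  set p : M := ((e.symm 1 : P) : M)
  obtain ⟨m₀, hm₀⟩ := Submodule.Quotient.mk_surjective P (f.symm 1)
  have hbm₀ : b • m₀ ∈ P := by
    rw [← Submodule.Quotient.mk_eq_zero, Submodule.Quotient.mk_smul, hm₀,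
      smul_symm_one_eq_zero_iff]
    exact Ideal.mem_span_singleton_self b
  obtain ⟨c₀, hc₀⟩ := exists_smul_symm_one_eq e ⟨b • m₀, hbm₀⟩
  replace hc₀ : b • m₀ = c₀ • p := congrArg Subtype.val hc₀.symm
  have hap : a • p = 0 :=
    (smul_coe_symm_one_eq_zero_iff e a).2 (Ideal.mem_span_singleton_self a)
  refine ⟨c₀, fun c hc => ?_⟩
  obtain ⟨x, y, hxy⟩ := Ideal.mem_span_pair.1 hc
  refine ⟨m₀ - y • p, ?_, ?_⟩
  · rw [Submodule.Quotient.mk_sub,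
      (Submodule.Quotient.mk_eq_zero P).2 (P.smul_mem y (e.symm 1).2), sub_zero, hm₀]
  · rw [smul_sub, hc₀, smul_smul, ← sub_smul,
      show c₀ - b * y = c + x * a by linear_combination -hxy, add_smul, mul_smul, hap, smul_zero,
      add_zero]

lemma nonempty_equiv_prod_of_smul_eq_zero (e : P ≃ₗ[A] A ⧸ Ideal.span {a})
    (f : (M ⧸ P) ≃ₗ[A] A ⧸ Ideal.span {b}) {m : M} (hm : Submodule.Quotient.mk m = f.symm 1)
    (hbm : b • m = 0) :
    Nonempty (M ≃ₗ[A] (A ⧸ Ideal.span {a}) × (A ⧸ Ideal.span {b})) := by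
  let s : (M ⧸ P) →ₗ[A] M := (Ideal.span {b}).liftQ (LinearMap.toSpanSingleton A M m)
    ((Ideal.span_singleton_le_iff_mem _).2 hbm) ∘ₗ f
  have hs₁ : s (f.symm 1) = m := by
    simp only [s, LinearMap.comp_apply, LinearEquiv.coe_coe, LinearEquiv.apply_symm_apply]
    exact one_smul A m
  have hs : P.mkQ ∘ₗ s = .id := LinearMap.ext fun x => by
    obtain ⟨r, rfl⟩ := exists_smul_symm_one_eq f x
    rw [LinearMap.comp_apply, map_smul, map_smul, hs₁, Submodule.mkQ_apply, hm,
      LinearMap.id_apply]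
  exact ⟨((LinearMap.exact_subtype_mkQ P).splitSurjectiveEquiv P.injective_subtype
    ⟨s, hs⟩).1.trans (e.prodCongr f)⟩

lemma span_singleton_eq_top_of_smul_eq_unit_smul (e : P ≃ₗ[A] A ⧸ Ideal.span {a})
    (f : (M ⧸ P) ≃ₗ[A] A ⧸ Ideal.span {b}) {m : M} (hm : Submodule.Quotient.mk m = f.symm 1)
    (u : Aˣ) (hbm : b • m = (u : A) • (e.symm 1 : M)) :
    Submodule.span A {m} = ⊤ := by
  have hp : (e.symm 1 : M) ∈ Submodule.span A {m} :=
    Submodule.mem_span_singleton.2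
      ⟨↑u⁻¹ * b, by rw [mul_smul, hbm, smul_smul, u.inv_mul, one_smul]⟩
  refine eq_top_iff.2 fun x _ => ?_
  obtain ⟨r, hr⟩ := exists_smul_symm_one_eq f (Submodule.Quotient.mk x)
  have hx : x - r • m ∈ P := by
    rw [← Submodule.Quotient.mk_eq_zero, Submodule.Quotient.mk_sub, Submodule.Quotient.mk_smul,
      hm, hr, sub_self]
  obtain ⟨s, hs⟩ := exists_smul_symm_one_eq e ⟨_, hx⟩
  replace hs : s • (e.symm 1 : M) = x - r • m := congrArg Subtype.val hs
  rw [← sub_add_cancel x (r • m), ← hs]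
  exact add_mem (Submodule.smul_mem _ s hp)
    (Submodule.smul_mem _ r (Submodule.mem_span_singleton_self m))

lemma ker_toSpanSingleton_eq_span_mul (e : P ≃ₗ[A] A ⧸ Ideal.span {a})
    (f : (M ⧸ P) ≃ₗ[A] A ⧸ Ideal.span {b}) {m : M} (hm : Submodule.Quotient.mk m = f.symm 1)
    (u : Aˣ) (hbm : b • m = (u : A) • (e.symm 1 : M)) :
    LinearMap.ker (LinearMap.toSpanSingleton A M m) = Ideal.span {a * b} := by
  ext r
  rw [LinearMap.mem_ker, LinearMap.toSpanSingleton_apply, Ideal.mem_span_singleton]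
  constructor
  · intro hr
    obtain ⟨s, rfl⟩ : b ∣ r := by
      rw [← Ideal.mem_span_singleton, ← smul_symm_one_eq_zero_iff f, ← hm,
        ← Submodule.Quotient.mk_smul, hr, Submodule.Quotient.mk_zero]
    have : a ∣ s * u := by
      rw [← Ideal.mem_span_singleton, ← smul_coe_symm_one_eq_zero_iff e, mul_smul, ← hbm,
        smul_smul, mul_comm, hr]
    rw [mul_comm b]
    exact mul_dvd_mul_right (Units.dvd_mul_right.1 this) b
  · rintro ⟨k, rfl⟩
    rw [show a * b * k = k * a * b by ring, mul_smul, hbm, smul_smul,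
      show k * a * u = k * u * a by ring, mul_smul,
      (smul_coe_symm_one_eq_zero_iff e a).2 (Ideal.mem_span_singleton_self a), smul_zero]

theorem nonempty_equiv_prod_or_quotient_mul (e : P ≃ₗ[A] A ⧸ Ideal.span {a})
    (f : (M ⧸ P) ≃ₗ[A] A ⧸ Ideal.span {b})
    (hab : ∀ x : A ⧸ Ideal.span {a, b}, x = 0 ∨ ∃ u : Aˣ, Ideal.Quotient.mk _ (u : A) = x) :
    Nonempty (M ≃ₗ[A] (A ⧸ Ideal.span {a}) × (A ⧸ Ideal.span {b})) ∨
      Nonempty (M ≃ₗ[A] A ⧸ Ideal.span {a * b}) := by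
  obtain ⟨c₀, hc₀⟩ := exists_mk_eq_and_smul_eq e f
  rcases hab (Ideal.Quotient.mk _ c₀) with h | ⟨u, hu⟩
  · obtain ⟨m, hm, hbm⟩ := hc₀ 0 (by rwa [sub_zero, ← Ideal.Quotient.eq_zero_iff_mem])
    exact .inl (nonempty_equiv_prod_of_smul_eq_zero e f hm (by rw [hbm, zero_smul]))
  · obtain ⟨m, hm, hbm⟩ := hc₀ u (Ideal.Quotient.eq.1 hu.symm)
    have hker := ker_toSpanSingleton_eq_span_mul e f hm u hbm
    refine .inr ⟨((Submodule.quotEquivOfEq _ _ hker.symm).trans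
      ((LinearMap.toSpanSingleton A M m).quotKerEquivOfSurjective ?_)).symm⟩
    rw [← LinearMap.range_eq_top, ← LinearMap.span_singleton_eq_range]
    exact span_singleton_eq_top_of_smul_eq_unit_smul e f hm u hbm

end Extension

lemma LaurentPolynomial.map_T_eq_neg_one_pow {S : Type*} [Ring S] (φ : R →+* S)
    (hφ : φ (T 1) = -1) (n : ℤ) : φ (T n) = (-1) ^ n.natAbs := by
  have hφ' : φ (T (-1)) = -1 := by
    have h : φ (T (-1)) * φ (T 1) = 1 := by
      rw [← map_mul, ← T_add, neg_add_cancel, T_zero, map_one]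
    rwa [hφ, mul_neg_one, neg_eq_iff_eq_neg] at h
  obtain ⟨k, rfl | rfl⟩ := Int.eq_nat_or_neg n
  · rw [← mul_one (k : ℤ), ← T_pow, map_pow, hφ, mul_one, Int.natAbs_natCast]
  · rw [← mul_neg_one (k : ℤ), ← T_pow, map_pow, hφ', Int.natAbs_mul, Int.natAbs_natCast]
    simp

lemma LaurentPolynomial.exists_intCast_eq_of_map_T_one_eq_neg_one {S : Type*} [Ring S]
    (φ : R →+* S) (hφ : φ (T 1) = -1) (c : R) : ∃ k : ℤ, φ c = k := by
  induction c using LaurentPolynomial.induction_on' with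
  | add p q hp hq =>
    obtain ⟨k, hk⟩ := hp
    obtain ⟨l, hl⟩ := hq
    exact ⟨k + l, by rw [map_add, hk, hl, Int.cast_add]⟩
  | C_mul_T n a =>
    have hC : φ (C a) = a := eq_intCast (φ.comp C) a
    exact ⟨a * (-1) ^ n.natAbs, by rw [map_mul, map_T_eq_neg_one_pow φ hφ, hC]; push_cast; rfl⟩

lemma LaurentPolynomial.eq_zero_or_eq_one_or_eq_neg_one_of_mem (I : Ideal R) (h₁ : tL - 2 ∈ I)
    (h₂ : 2 * tL - 1 ∈ I) (x : R ⧸ I) : x = 0 ∨ x = 1 ∨ x = -1 := by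
  have h₁ : Ideal.Quotient.mk I (T 1) - 2 = 0 := Ideal.Quotient.eq_zero_iff_mem.2 h₁
  have h₂ : 2 * Ideal.Quotient.mk I (T 1) - 1 = 0 := Ideal.Quotient.eq_zero_iff_mem.2 h₂
  have h₃ : (3 : R ⧸ I) = 0 := by linear_combination h₂ - 2 * h₁
  obtain ⟨c, rfl⟩ := Ideal.Quotient.mk_surjective x
  obtain ⟨k, hk⟩ := exists_intCast_eq_of_map_T_one_eq_neg_one _ (by linear_combination h₂ - h₁) c
  obtain ⟨q, hq⟩ : ∃ q, k = 3 * q ∨ k = 3 * q + 1 ∨ k = 3 * q - 1 := ⟨(k + 1) / 3, by omega⟩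
  rw [hk]
  rcases hq with rfl | rfl | rfl <;> simp [h₃]

theorem middle_module_of_extension_classification
    (M : Type*) [AddCommGroup M] [Module (LaurentPolynomial ℤ) M]
    (P : Submodule (LaurentPolynomial ℤ) M)
    (h : (Nonempty (P ≃ₗ[LaurentPolynomial ℤ] (R ⧸ (Ideal.span {2 * tL - 1} : Ideal R))) ∧
            Nonempty ((M ⧸ P) ≃ₗ[LaurentPolynomial ℤ] (R ⧸ (Ideal.span {tL - 2} : Ideal R)))) ∨
         (Nonempty (P ≃ₗ[LaurentPolynomial ℤ] (R ⧸ (Ideal.span {tL - 2} : Ideal R))) ∧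
            Nonempty ((M ⧸ P) ≃ₗ[LaurentPolynomial ℤ] (R ⧸ (Ideal.span {2 * tL - 1} : Ideal R))))) :
    Nonempty (M ≃ₗ[LaurentPolynomial ℤ]
        ((R ⧸ (Ideal.span {tL - 2} : Ideal R)) × (R ⧸ (Ideal.span {2 * tL - 1} : Ideal R)))) ∨
    Nonempty (M ≃ₗ[LaurentPolynomial ℤ]
        (R ⧸ (Ideal.span {(tL - 2) * (2 * tL - 1)} : Ideal R))) := by
  have hunits (I : Ideal R) (h₁ : tL - 2 ∈ I) (h₂ : 2 * tL - 1 ∈ I) (x : R ⧸ I) :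
      x = 0 ∨ ∃ u : Rˣ, Ideal.Quotient.mk I (u : R) = x := by
    rcases eq_zero_or_eq_one_or_eq_neg_one_of_mem I h₁ h₂ x with rfl | rfl | rfl
    · exact .inl rfl
    · exact .inr ⟨1, map_one _⟩
    · exact .inr ⟨-1, by simp⟩
  rcases h with ⟨⟨e⟩, ⟨f⟩⟩ | ⟨⟨e⟩, ⟨f⟩⟩
  · rcases nonempty_equiv_prod_or_quotient_mul e f
        (hunits _ (Ideal.subset_span (by simp)) (Ideal.subset_span (by simp)))
      with ⟨⟨g⟩⟩ | ⟨⟨g⟩⟩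
    · exact .inl ⟨g.trans (LinearEquiv.prodComm _ _ _)⟩
    · exact .inr ⟨g.trans (Submodule.quotEquivOfEq _ _ (by rw [mul_comm]))⟩
  · exact nonempty_equiv_prod_or_quotient_mul e f
      (hunits _ (Ideal.subset_span (by simp)) (Ideal.subset_span (by simp)))
end

section
/- The ℤ[t^{±1}]-module ℤ[t^{±1}]/(t−2) ⊕ ℤ[t^{±1}]/(2t−1) is not cyclic, i.e. there is no single element generating it as a ℤ[t^{±1}]-module; in particular it is not isomorphic as a ℤ[t^{±1}]-module to ℤ[t^{±1}]/((t−2)(2t−1)). -/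
/-!
If `x` generates `A ⧸ I × A ⧸ J`, some `p, q` move it to `(1, 0)` and `(0, 1)`; in `A ⧸ (I ⊔ J)`
this gives `1 = p x₁ · q x₂ = q x₁ · p x₂ = 0`, so `I ⊔ J = ⊤`. But `(t - 2, 2t - 1)` lies in the
kernel of `ℤ[t^{±1}] → 𝔽₃, t ↦ -1`. The module `ℤ[t^{±1}] ⧸ ((t - 2)(2t - 1))`, being cyclic, is
therefore not isomorphic to the sum.
-/

open LaurentPolynomial

local notation "R" => LaurentPolynomial ℤ

theorem Ideal.sup_eq_top_of_span_singleton_prod_quotient_eq_top {A : Type*} [CommRing A]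
    {I J : Ideal A} {x : (A ⧸ I) × (A ⧸ J)} (hx : Submodule.span A {x} = ⊤) : I ⊔ J = ⊤ := by
  have hspan (y : (A ⧸ I) × (A ⧸ J)) : ∃ a : A, a • x = y :=
    Submodule.mem_span_singleton.mp (hx ▸ Submodule.mem_top)
  obtain ⟨p, hp₁, hp₂⟩ : ∃ p : A, p • x.1 = 1 ∧ p • x.2 = 0 := by
    simpa [Prod.ext_iff] using hspan (1, 0)
  obtain ⟨q, hq₁, hq₂⟩ : ∃ q : A, q • x.1 = 0 ∧ q • x.2 = 1 := by
    simpa [Prod.ext_iff] using hspan (0, 1)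
  let f := Ideal.Quotient.factorₐ A (le_sup_left : I ≤ I ⊔ J)
  let g := Ideal.Quotient.factorₐ A (le_sup_right : J ≤ I ⊔ J)
  rw [← Ideal.Quotient.subsingleton_iff]
  refine subsingleton_of_zero_eq_one ?_
  calc (0 : A ⧸ (I ⊔ J)) = f (q • x.1) * g (p • x.2) := by rw [hq₁, map_zero, zero_mul]
    _ = f (p • x.1) * g (q • x.2) := by
        rw [map_smul, map_smul, map_smul, map_smul, smul_mul_smul_comm, smul_mul_smul_comm,
          mul_comm p q]
    _ = 1 := by rw [hp₁, hq₂, map_one, map_one, one_mul]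

theorem LinearEquiv.span_singleton_symm_eq_top {A M N : Type*} [Semiring A] [AddCommMonoid M]
    [AddCommMonoid N] [Module A M] [Module A N] (e : M ≃ₗ[A] N) {y : N}
    (hy : Submodule.span A {y} = ⊤) : Submodule.span A {e.symm y} = ⊤ := by
  rw [← Set.image_singleton, ← LinearEquiv.coe_coe, ← Submodule.map_span, hy, Submodule.map_top,
    LinearEquiv.range]

theorem span_tL_sub_two_sup_span_two_mul_tL_sub_one_ne_top :
    (Ideal.span {tL - 2} ⊔ Ideal.span {2 * tL - 1} : Ideal R) ≠ ⊤ := by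
  let φ : R →+* ZMod 3 := eval₂ (Int.castRingHom _) (-1)
  have hφ : φ tL = -1 := by simp [φ, tL]
  refine ne_top_of_le_ne_top (RingHom.ker_ne_top φ) (sup_le ?_ ?_) <;>
    rw [Ideal.span_le, Set.singleton_subset_iff, SetLike.mem_coe, RingHom.mem_ker] <;>
    simp only [map_sub, map_mul, map_ofNat, map_one, hφ] <;> decide

theorem split_extension_module_not_cyclic :
    (¬ ∃ x : (R ⧸ (Ideal.span {tL - 2} : Ideal R)) × (R ⧸ (Ideal.span {2 * tL - 1} : Ideal R)),
        Submodule.span (LaurentPolynomial ℤ) {x} = ⊤) ∧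
    ¬ Nonempty (((R ⧸ (Ideal.span {tL - 2} : Ideal R)) × (R ⧸ (Ideal.span {2 * tL - 1} : Ideal R)))
        ≃ₗ[LaurentPolynomial ℤ] (R ⧸ (Ideal.span {(tL - 2) * (2 * tL - 1)} : Ideal R))) := by
  have not_cyclic : ¬ ∃ x : (R ⧸ (Ideal.span {tL - 2} : Ideal R)) ×
      (R ⧸ (Ideal.span {2 * tL - 1} : Ideal R)), Submodule.span R {x} = ⊤ :=
    fun ⟨_, hx⟩ => span_tL_sub_two_sup_span_two_mul_tL_sub_one_ne_top
      (Ideal.sup_eq_top_of_span_singleton_prod_quotient_eq_top hx)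
  exact ⟨not_cyclic, fun ⟨e⟩ =>
    not_cyclic ⟨_, e.span_singleton_symm_eq_top (Ideal.Quotient.span_singleton_one _)⟩⟩
end

section
/- Let M be the ℤ[t^{±1}]-module ℤ[t^{±1}]/(2t−1) ⊕ ℤ[t^{±1}]/(t−2). If P ⊆ M is a submodule that is isomorphic as a ℤ[t^{±1}]-module to ℤ[t^{±1}]/(2t−1) and such that the quotient M/P is isomorphic to ℤ[t^{±1}]/(t−2), then P equals the first direct summand ℤ[t^{±1}]/(2t−1) ⊕ {0}. -/
open LaurentPolynomial

local notation "R" => LaurentPolynomial ℤ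

lemma poly_three_cancel (p s : Polynomial ℤ)
    (hp : p.map (Int.castRingHom (ZMod 3)) ≠ 0) (h : p ∣ 3 * s) : p ∣ s := by
  obtain ⟨r, hr⟩ := h
  have h3 : (3 : Polynomial (ZMod 3)) = 0 := by
    rw [← map_ofNat (Polynomial.C : ZMod 3 →+* Polynomial (ZMod 3)) 3,
      show (3 : ZMod 3) = 0 by decide, map_zero]
  have hmap : (0 : Polynomial (ZMod 3)) =
      p.map (Int.castRingHom (ZMod 3)) * r.map (Int.castRingHom (ZMod 3)) := by
    have := congrArg (Polynomial.map (Int.castRingHom (ZMod 3))) hr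
    simpa [Polynomial.map_mul, Polynomial.map_ofNat, h3] using this
  have hr0 : r.map (Int.castRingHom (ZMod 3)) = 0 := by
    rcases mul_eq_zero.mp hmap.symm with h' | h'
    · exact absurd h' hp
    · exact h'
  have hdvd : (Polynomial.C (3:ℤ)) ∣ r := by
    rw [Polynomial.C_dvd_iff_dvd_coeff]
    intro i
    have : ((r.coeff i : ℤ) : ZMod 3) = 0 := by
      have := congrArg (fun q => Polynomial.coeff q i) hr0
      simpa [Polynomial.coeff_map] using this
    exact_mod_cast (ZMod.intCast_zmod_eq_zero_iff_dvd _ 3).mp this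
  obtain ⟨r', hr'⟩ := hdvd
  refine ⟨r', ?_⟩
  have h3' : (3 : Polynomial ℤ) ≠ 0 := by norm_num
  apply mul_left_cancel₀ h3'
  rw [hr, hr', map_ofNat]
  ring

lemma laurent_three_cancel (p : Polynomial ℤ)
    (hp : p.map (Int.castRingHom (ZMod 3)) ≠ 0) (q : R)
    (h : p.toLaurent ∣ 3 * q) : p.toLaurent ∣ q := by
  obtain ⟨r, hr⟩ := h
  obtain ⟨n, q', hq'⟩ := exists_T_pow q
  obtain ⟨m, r', hr'⟩ := exists_T_pow r
  have key : (3 : Polynomial ℤ) * q' * Polynomial.X ^ m = p * r' * Polynomial.X ^ n := by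
    apply Polynomial.toLaurent_injective
    calc Polynomial.toLaurent (3 * q' * Polynomial.X ^ m)
        = 3 * (q * T (n:ℤ)) * T (m:ℤ) := by
          rw [map_mul, map_mul, Polynomial.toLaurent_X_pow, hq', map_ofNat]
      _ = (3 * q) * T (n:ℤ) * T (m:ℤ) := by ring
      _ = p.toLaurent * (r * T (m:ℤ)) * T (n:ℤ) := by rw [hr]; ring
      _ = Polynomial.toLaurent (p * r' * Polynomial.X ^ n) := by
          rw [map_mul, map_mul, Polynomial.toLaurent_X_pow, hr']
  have hdvd : p ∣ q' * Polynomial.X ^ m := by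
    apply poly_three_cancel p _ hp
    exact ⟨r' * Polynomial.X ^ n, by linear_combination key⟩
  obtain ⟨s, hs⟩ := hdvd
  refine ⟨s.toLaurent * T (-(n:ℤ) + -(m:ℤ)), ?_⟩
  have h1 : Polynomial.toLaurent (q' * Polynomial.X ^ m) = q * T (n:ℤ) * T (m:ℤ) := by
    rw [map_mul, Polynomial.toLaurent_X_pow, hq']
  have h2 : Polynomial.toLaurent (q' * Polynomial.X ^ m) = p.toLaurent * s.toLaurent := by
    rw [hs, map_mul]
  calc q = q * T (n:ℤ) * T (m:ℤ) * T (-(n:ℤ) + -(m:ℤ)) := by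
            rw [mul_assoc, mul_assoc, ← T_add, ← T_add]
            norm_num
    _ = p.toLaurent * (s.toLaurent * T (-(n:ℤ) + -(m:ℤ))) := by
            rw [← h1, h2, mul_assoc]

lemma two_tL_sub_one : (2 * tL - 1 : R) = Polynomial.toLaurent (2 * Polynomial.X - 1) := by
  simp [tL, map_sub, map_mul, map_ofNat, Polynomial.toLaurent_X]

lemma tL_sub_two : (tL - 2 : R) = Polynomial.toLaurent (Polynomial.X - 2) := by
  simp [tL, map_sub, map_ofNat, Polynomial.toLaurent_X]

lemma map1_ne : (2 * Polynomial.X - 1 : Polynomial ℤ).map (Int.castRingHom (ZMod 3)) ≠ 0 := by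
  intro h
  have h0 := congrArg (fun q => Polynomial.coeff q 0) h
  simp [Polynomial.coeff_map] at h0

lemma map2_ne : (Polynomial.X - 2 : Polynomial ℤ).map (Int.castRingHom (ZMod 3)) ≠ 0 := by
  intro h
  have h0 := congrArg (fun q => Polynomial.coeff q 0) h
  simp [Polynomial.coeff_map] at h0
  exact absurd h0 (by decide)

lemma smul_mk (I : Ideal R) (r q : R) :
    r • (Ideal.Quotient.mk I q) = Ideal.Quotient.mk I (r * q) := rfl

lemma hom_AB_zero (f : (R ⧸ (Ideal.span {2 * tL - 1} : Ideal R)) →ₗ[R]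
    (R ⧸ (Ideal.span {tL - 2} : Ideal R))) : f = 0 := by
  apply LinearMap.ext
  intro x
  obtain ⟨q, rfl⟩ := Ideal.Quotient.mk_surjective x
  obtain ⟨b, hb⟩ := Ideal.Quotient.mk_surjective (f (Ideal.Quotient.mk _ q))
  have h0 : (2 * tL - 1) • (Ideal.Quotient.mk (Ideal.span {2*tL-1} : Ideal R) q) = 0 := by
    rw [smul_mk]
    exact Ideal.Quotient.eq_zero_iff_mem.mpr
      (Ideal.mul_mem_right q _ (Ideal.subset_span rfl))
  have h1 : (2 * tL - 1) • f (Ideal.Quotient.mk _ q) = 0 := by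
    rw [← map_smul, h0, map_zero]
  rw [← hb, smul_mk] at h1
  have h2 : (tL - 2) ∣ (2 * tL - 1) * b :=
    (Ideal.mem_span_singleton).mp (Ideal.Quotient.eq_zero_iff_mem.mp h1)
  have h3 : (tL - 2) ∣ 3 * b := by
    have he : (3:R) * b = (2*tL-1)*b - 2*((tL-2)*b) := by ring
    rw [he]
    exact dvd_sub h2 (Dvd.dvd.mul_left (Dvd.dvd.mul_right dvd_rfl b) 2)
  have h4 : (tL - 2) ∣ b := by
    rw [tL_sub_two] at h3 ⊢
    exact laurent_three_cancel _ map2_ne b h3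
  rw [← hb]
  simp only [LinearMap.zero_apply]
  exact Ideal.Quotient.eq_zero_iff_mem.mpr (Ideal.mem_span_singleton.mpr h4)

lemma hom_BA_zero (f : (R ⧸ (Ideal.span {tL - 2} : Ideal R)) →ₗ[R]
    (R ⧸ (Ideal.span {2 * tL - 1} : Ideal R))) : f = 0 := by
  apply LinearMap.ext
  intro x
  obtain ⟨q, rfl⟩ := Ideal.Quotient.mk_surjective x
  obtain ⟨b, hb⟩ := Ideal.Quotient.mk_surjective (f (Ideal.Quotient.mk _ q))
  have h0 : (tL - 2) • (Ideal.Quotient.mk (Ideal.span {tL-2} : Ideal R) q) = 0 := by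
    rw [smul_mk]
    exact Ideal.Quotient.eq_zero_iff_mem.mpr
      (Ideal.mul_mem_right q _ (Ideal.subset_span rfl))
  have h1 : (tL - 2) • f (Ideal.Quotient.mk _ q) = 0 := by
    rw [← map_smul, h0, map_zero]
  rw [← hb, smul_mk] at h1
  have h2 : (2 * tL - 1) ∣ (tL - 2) * b :=
    (Ideal.mem_span_singleton).mp (Ideal.Quotient.eq_zero_iff_mem.mp h1)
  have h3 : (2 * tL - 1) ∣ 3 * b := by
    have he : (3:R) * b = (2*tL-1)*b - 2*((tL-2)*b) := by ring
    rw [he]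
    exact dvd_sub (Dvd.dvd.mul_right dvd_rfl b) (Dvd.dvd.mul_left h2 2)
  have h4 : (2 * tL - 1) ∣ b := by
    rw [two_tL_sub_one] at h3 ⊢
    exact laurent_three_cancel _ map1_ne b h3
  rw [← hb]
  simp only [LinearMap.zero_apply]
  exact Ideal.Quotient.eq_zero_iff_mem.mpr (Ideal.mem_span_singleton.mpr h4)

theorem lagrangian_of_split_module_is_first_summand
    (P : Submodule (LaurentPolynomial ℤ)
        ((R ⧸ (Ideal.span {2 * tL - 1} : Ideal R)) × (R ⧸ (Ideal.span {tL - 2} : Ideal R))))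
    (h1 : Nonempty (P ≃ₗ[LaurentPolynomial ℤ] (R ⧸ (Ideal.span {2 * tL - 1} : Ideal R))))
    (h2 : Nonempty ((((R ⧸ (Ideal.span {2 * tL - 1} : Ideal R))
          × (R ⧸ (Ideal.span {tL - 2} : Ideal R))) ⧸ P)
        ≃ₗ[LaurentPolynomial ℤ] (R ⧸ (Ideal.span {tL - 2} : Ideal R)))) :
    P = Submodule.fst (LaurentPolynomial ℤ)
        (R ⧸ (Ideal.span {2 * tL - 1} : Ideal R)) (R ⧸ (Ideal.span {tL - 2} : Ideal R)) := by
  obtain ⟨e1⟩ := h1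
  obtain ⟨e2⟩ := h2
  apply le_antisymm
  · intro x hx
    have hf : ((LinearMap.snd (LaurentPolynomial ℤ) _ _).comp
        (P.subtype.comp e1.symm.toLinearMap)) = 0 := hom_AB_zero _
    have hx2 := LinearMap.congr_fun hf (e1 ⟨x, hx⟩)
    simp only [LinearMap.comp_apply, LinearEquiv.coe_coe, LinearEquiv.symm_apply_apply,
      Submodule.subtype_apply, LinearMap.snd_apply, LinearMap.zero_apply] at hx2
    show x ∈ Submodule.fst (LaurentPolynomial ℤ) _ _
    simp only [Submodule.fst, Submodule.mem_comap, Submodule.mem_bot, LinearMap.snd_apply]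
    exact hx2
  · rintro ⟨a, b⟩ hx
    have hb : b = 0 := by
      simpa only [Submodule.fst, Submodule.mem_comap, Submodule.mem_bot,
        LinearMap.snd_apply] using hx
    subst hb
    have hg : (e2.toLinearMap.comp (P.mkQ.comp
        (LinearMap.inl (LaurentPolynomial ℤ) _ _))) = 0 := hom_AB_zero _
    have h0 := LinearMap.congr_fun hg a
    simp only [LinearMap.comp_apply, LinearEquiv.coe_coe, LinearMap.inl_apply,
      LinearMap.zero_apply] at h0
    have hm : P.mkQ (a, 0) = 0 := by
      apply e2.injective
      rw [e2.map_zero]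
      exact h0
    rwa [Submodule.mkQ_apply, Submodule.Quotient.mk_eq_zero] at hm
end

section
/- Let M be the ℤ[t^{±1}]-module ℤ[t^{±1}]/(2t−1) ⊕ ℤ[t^{±1}]/(t−2). If P ⊆ M is a submodule that is isomorphic as a ℤ[t^{±1}]-module to ℤ[t^{±1}]/(t−2) and such that the quotient M/P is isomorphic to ℤ[t^{±1}]/(2t−1), then P equals the second direct summand {0} ⊕ ℤ[t^{±1}]/(t−2). -/
open LaurentPolynomial

local notation "R" => LaurentPolynomial ℤ

open Polynomial in
set_option maxHeartbeats 1000000 in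
lemma key_dvd {f : LaurentPolynomial ℤ} (h : (2*tL-1) ∣ 3*f) : (2*tL-1) ∣ f := by
  obtain ⟨g, hg⟩ := h
  obtain ⟨a, F, hF⟩ := f.exists_T_pow
  obtain ⟨b, G, hG⟩ := g.exists_T_pow
  have hC3 : Polynomial.C (3:ℤ) = (3 : Polynomial ℤ) := map_ofNat (Polynomial.C : ℤ →+* Polynomial ℤ) 3
  have e1 : Polynomial.toLaurent (3*F*X^b) = Polynomial.toLaurent ((2*X-1)*G*X^a) := by
    simp only [map_mul, map_sub, map_ofNat, Polynomial.toLaurent_X_pow, Polynomial.toLaurent_X,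
      map_one, hF, hG]
    calc 3 * (f * T (a:ℤ)) * T (b:ℤ) = (3 * f) * T (a:ℤ) * T (b:ℤ) := by ring
    _ = ((2 * T 1 - 1) * g) * T (a:ℤ) * T (b:ℤ) := by rw [hg]; rfl
    _ = (2 * T 1 - 1) * (g * T (b:ℤ)) * T (a:ℤ) := by ring
  have e2 : 3*F*X^b = (2*X-1)*G*X^a := Polynomial.toLaurent_injective e1
  have hp : Prime (3:Polynomial ℤ) := by
    rw [← hC3, Polynomial.prime_C_iff]; exact Int.prime_three
  have hnd : ¬ ((3:Polynomial ℤ) ∣ (2*X-1)) := by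
    rw [← hC3, Polynomial.C_dvd_iff_dvd_coeff]
    intro h; have := h 0; norm_num at this
  have hndX : ¬ ((3:Polynomial ℤ) ∣ X) := by
    rw [← hC3, Polynomial.C_dvd_iff_dvd_coeff]
    intro h; have := h 1; norm_num at this
  have h3 : (3:Polynomial ℤ) ∣ G := by
    have hd : (3:Polynomial ℤ) ∣ (2*X-1)*(G*X^a) := ⟨F*X^b, by rw [← mul_assoc, ← e2]; ring⟩
    rcases hp.dvd_mul.mp hd with h' | h'
    · exact absurd h' hnd
    rcases hp.dvd_mul.mp h' with h'' | h''
    · exact h''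
    · exact absurd (hp.dvd_of_dvd_pow h'') hndX
  obtain ⟨H, hH⟩ := h3
  have e3 : F*X^b = (2*X-1)*H*X^a := by
    have h30 : (3:Polynomial ℤ) ≠ 0 := by norm_num
    apply mul_left_cancel₀ h30
    calc (3:Polynomial ℤ) * (F*X^b) = 3*F*X^b := by ring
    _ = (2*X-1)*G*X^a := e2
    _ = 3*((2*X-1)*H*X^a) := by rw [hH]; ring
  have e4 : f * T (a:ℤ) * T (b:ℤ) = (2*tL-1) * (Polynomial.toLaurent H * T (a:ℤ)) := by
    have := congrArg Polynomial.toLaurent e3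
    simp only [map_mul, map_sub, map_ofNat, Polynomial.toLaurent_X_pow, Polynomial.toLaurent_X,
      map_one, hF] at this
    rw [this]; show (2 * T 1 - 1) * _ * _ = _; unfold tL; ring
  have hdvd : (2*tL-1) ∣ f * T (a:ℤ) * T (b:ℤ) := ⟨_, e4⟩
  rwa [(isUnit_T (b:ℤ)).dvd_mul_right, (isUnit_T (a:ℤ)).dvd_mul_right] at hdvd

set_option maxHeartbeats 1000000 in
set_option synthInstance.maxHeartbeats 400000 in
theorem lagrangian_of_split_module_is_second_summand
    (P : Submodule (LaurentPolynomial ℤ)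
        ((R ⧸ (Ideal.span {2 * tL - 1} : Ideal R)) × (R ⧸ (Ideal.span {tL - 2} : Ideal R))))
    (h1 : Nonempty (P ≃ₗ[LaurentPolynomial ℤ] (R ⧸ (Ideal.span {tL - 2} : Ideal R))))
    (h2 : Nonempty ((((R ⧸ (Ideal.span {2 * tL - 1} : Ideal R))
          × (R ⧸ (Ideal.span {tL - 2} : Ideal R))) ⧸ P)
        ≃ₗ[LaurentPolynomial ℤ] (R ⧸ (Ideal.span {2 * tL - 1} : Ideal R)))) :
    P = Submodule.snd (LaurentPolynomial ℤ)
        (R ⧸ (Ideal.span {2 * tL - 1} : Ideal R)) (R ⧸ (Ideal.span {tL - 2} : Ideal R)) := by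
  obtain ⟨e⟩ := h1
  obtain ⟨f⟩ := h2
  have hsmul : ∀ (I : Ideal R) (r x : R),
      r • Ideal.Quotient.mk I x = Ideal.Quotient.mk I (r * x) := fun I r x => by
    rw [← Ideal.Quotient.mk_eq_mk, ← Ideal.Quotient.mk_eq_mk, ← Submodule.Quotient.mk_smul,
      smul_eq_mul]
  have reg : ∀ a : R ⧸ (Ideal.span {2*tL-1} : Ideal R), (3:R) • a = 0 → a = 0 := by
    intro a h
    obtain ⟨x, rfl⟩ := Ideal.Quotient.mk_surjective a
    rw [hsmul, Ideal.Quotient.eq_zero_iff_mem, Ideal.mem_span_singleton] at h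
    rw [Ideal.Quotient.eq_zero_iff_mem, Ideal.mem_span_singleton]
    exact key_dvd h
  have hA : ∀ a : R ⧸ (Ideal.span {2*tL-1} : Ideal R), (2*tL-1) • a = 0 := by
    intro a
    obtain ⟨x, rfl⟩ := Ideal.Quotient.mk_surjective a
    rw [hsmul, Ideal.Quotient.eq_zero_iff_mem]
    exact Ideal.mul_mem_right _ _ (Ideal.subset_span rfl)
  have hB : ∀ b : R ⧸ (Ideal.span {tL-2} : Ideal R), (tL-2) • b = 0 := by
    intro b
    obtain ⟨x, rfl⟩ := Ideal.Quotient.mk_surjective b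
    rw [hsmul, Ideal.Quotient.eq_zero_iff_mem]
    exact Ideal.mul_mem_right _ _ (Ideal.subset_span rfl)
  have hfact : (2*tL-1 : R) - 3 = 2*(tL-2) := by ring
  -- Step 1 : P ≤ snd
  have hP1 : ∀ x ∈ P, x.1 = 0 := by
    intro x hx
    have h0 : (tL - 2) • (⟨x, hx⟩ : P) = 0 := by
      rw [← LinearEquiv.map_eq_zero_iff e, LinearEquiv.map_smul]
      exact hB _
    have h0' : (tL - 2) • x = 0 := by
      have := congrArg Subtype.val h0
      rwa [Submodule.coe_smul, ZeroMemClass.coe_zero] at this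
    have h1' : (tL - 2) • x.1 = 0 := by
      have := congrArg Prod.fst h0'
      rwa [Prod.smul_fst, Prod.fst_zero] at this
    have h2' : ((2*(tL-2) : R)) • x.1 = 0 := by rw [mul_smul, h1', smul_zero]
    have h3' : (3:R) • x.1 = 0 := by
      have hz : ((2*tL-1 : R) - 3) • x.1 = 0 := by rw [hfact]; exact h2'
      rwa [sub_smul, hA, zero_sub, neg_eq_zero] at hz
    exact reg _ h3'
  -- Step 2
  have hP2 : ∀ m, (2*tL-1) • m ∈ P := by
    intro m
    have h0 : (2*tL-1) • (Submodule.Quotient.mk m : _ ⧸ P) = 0 := by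
      rw [← LinearEquiv.map_eq_zero_iff f, LinearEquiv.map_smul]
      exact hA _
    rwa [← Submodule.Quotient.mk_smul, Submodule.Quotient.mk_eq_zero] at h0
  -- Step 3
  have hP3 : ∀ b : R ⧸ (Ideal.span {tL-2} : Ideal R), ((0 : R ⧸ (Ideal.span {2*tL-1} : Ideal R)),
      (3:R) • b) ∈ P := by
    intro b
    have h := hP2 ((0 : R ⧸ (Ideal.span {2*tL-1} : Ideal R)), b)
    have hbb : (2*tL-1 : R) • b = (3:R) • b := by
      have hz : ((2*tL-1:R) - 3) • b = 0 := by rw [hfact, mul_smul, hB, smul_zero]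
      rw [sub_smul] at hz
      exact sub_eq_zero.mp hz
    have heq : (2*tL-1 : R) • ((0 : R ⧸ (Ideal.span {2*tL-1} : Ideal R)), b)
        = ((0 : R ⧸ (Ideal.span {2*tL-1} : Ideal R)), (3:R) • b) := by
      rw [Prod.smul_mk, smul_zero, hbb]
    rwa [heq] at h
  apply le_antisymm
  · intro x hx
    show x ∈ Submodule.snd _ _ _
    simp only [Submodule.snd, Submodule.mem_comap, Submodule.mem_bot, LinearMap.fst_apply]
    exact hP1 x hx
  · intro x hx
    have hx1 : x.1 = 0 := by
      simpa only [Submodule.snd, Submodule.mem_comap, Submodule.mem_bot,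
        LinearMap.fst_apply] using hx
    by_contra hxP
    have hq : (Submodule.Quotient.mk x : _ ⧸ P) ≠ 0 := by
      rwa [ne_eq, Submodule.Quotient.mk_eq_zero]
    have h3x : (3:R) • x ∈ P := by
      have h := hP3 x.2
      have hx3 : (3:R) • x = ((0 : R ⧸ (Ideal.span {2*tL-1} : Ideal R)), (3:R) • x.2) := by
        calc (3:R) • x = (3:R) • (x.1, x.2) := rfl
        _ = ((3:R) • x.1, (3:R) • x.2) := Prod.smul_mk _ _ _
        _ = (0, (3:R) • x.2) := by rw [hx1, smul_zero]
      rwa [hx3]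
    have h3q : (3:R) • (Submodule.Quotient.mk x : _ ⧸ P) = 0 := by
      rw [← Submodule.Quotient.mk_smul, Submodule.Quotient.mk_eq_zero]
      exact h3x
    have hf0 : f (Submodule.Quotient.mk x) = 0 := by
      apply reg
      rw [← LinearEquiv.map_smul, h3q, LinearEquiv.map_zero]
    exact hq ((LinearEquiv.map_eq_zero_iff f).mp hf0)
end

section
/- Let M be the ℤ[t^{±1}]-module ℤ[t^{±1}]/((t−2)(2t−1)). Then the submodules (t−2)·M and (2t−1)·M (the images of multiplication by t−2 and by 2t−1 on M) are distinct. -/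
open LaurentPolynomial

local notation "R" => LaurentPolynomial ℤ

/-!
If `(t - 2)M = (2t - 1)M` for `M = ℤ[t^{±1}]/((t - 2)(2t - 1))`, then the class of `t - 2` is
`(2t - 1)x` for some `x`, so `2t - 1` divides `t - 2` in `ℤ[t^{±1}]`. Evaluating at `t = 1/2`,
a root of `2t - 1` but not of `t - 2`, shows that it does not.
-/

theorem Ideal.dvd_of_range_lsmul_quotient_le {A : Type*} [CommRing A] {I : Ideal A} {a b : A}
    (hI : I ≤ Ideal.span {b})
    (h : LinearMap.range (LinearMap.lsmul A (A ⧸ I) a) ≤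
      LinearMap.range (LinearMap.lsmul A (A ⧸ I) b)) :
    b ∣ a := by
  obtain ⟨m, hm⟩ := h ⟨Ideal.Quotient.mk I 1, rfl⟩
  obtain ⟨x, rfl⟩ := Ideal.Quotient.mk_surjective m
  have hdiff : b * x - a ∈ I := by
    rw [← Ideal.Quotient.eq_zero_iff_mem, map_sub, sub_eq_zero]
    simpa [Algebra.smul_def] using hm
  have hb : b ∣ b * x - a := Ideal.mem_span_singleton.mp (hI hdiff)
  simpa using (dvd_sub_right (dvd_mul_right b x)).mp hb

theorem not_two_mul_tL_sub_one_dvd_tL_sub_two : ¬ (2 * tL - 1) ∣ (tL - 2) := by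
  let φ : LaurentPolynomial ℤ →+* ℚ := eval₂ (Int.castRingHom ℚ) (Units.mk0 2⁻¹ (by norm_num))
  have hφ : φ tL = 2⁻¹ := by simp [φ, tL]
  intro h
  have := map_dvd φ h
  simp only [map_sub, map_mul, map_ofNat, map_one, hφ] at this
  norm_num at this

theorem two_lagrangians_of_cyclic_module_are_distinct :
    LinearMap.range (LinearMap.lsmul (LaurentPolynomial ℤ)
        (R ⧸ (Ideal.span {(tL - 2) * (2 * tL - 1)} : Ideal R)) (tL - 2)) ≠
    LinearMap.range (LinearMap.lsmul (LaurentPolynomial ℤ)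
        (R ⧸ (Ideal.span {(tL - 2) * (2 * tL - 1)} : Ideal R)) (2 * tL - 1)) := fun h =>
  not_two_mul_tL_sub_one_dvd_tL_sub_two <| Ideal.dvd_of_range_lsmul_quotient_le
    (Ideal.span_singleton_le_span_singleton.mpr (dvd_mul_left _ _)) h.le
end

section
/- Let M be the ℤ[t^{±1}]-module ℤ[t^{±1}]/((t−2)(2t−1)). For an element x of M, one has (2t−1)·x = 0 if and only if x lies in the submodule (t−2)·M. In other words, the (2t−1)-torsion submodule of M is exactly the image of multiplication by t−2. -/
open LaurentPolynomial

local notation "R" => LaurentPolynomial ℤ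

lemma two_tL_sub_one_ne_zero : (2 * tL - 1 : LaurentPolynomial ℤ) ≠ 0 := by
  have : (2 * tL - 1 : LaurentPolynomial ℤ) = Polynomial.toLaurent (2 * Polynomial.X - 1) := by
    simp only [map_sub, map_mul, map_one, map_ofNat, Polynomial.toLaurent_X, tL]
  rw [this, Polynomial.toLaurent_ne_zero]
  intro h
  have h2 := congrArg (Polynomial.coeff · 1) h
  simp [Polynomial.coeff_one] at h2

lemma smul_mk_eq (I : Ideal (LaurentPolynomial ℤ)) (r p : LaurentPolynomial ℤ) :
    r • (Ideal.Quotient.mk I p) = Ideal.Quotient.mk I (r * p) := rfl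

theorem torsion_of_cyclic_module_eq_image
    (x : R ⧸ (Ideal.span {(tL - 2) * (2 * tL - 1)} : Ideal R)) :
    (2 * tL - 1) • x = 0 ↔
      x ∈ LinearMap.range (LinearMap.lsmul (LaurentPolynomial ℤ)
        (R ⧸ (Ideal.span {(tL - 2) * (2 * tL - 1)} : Ideal R)) (tL - 2)) := by
  obtain ⟨p, rfl⟩ := Ideal.Quotient.mk_surjective x
  constructor
  · intro h
    rw [smul_mk_eq, Ideal.Quotient.eq_zero_iff_mem, Ideal.mem_span_singleton] at h
    obtain ⟨q, hq⟩ := h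
    have hp : p = (tL - 2) * q := by
      apply mul_left_cancel₀ two_tL_sub_one_ne_zero
      rw [hq]; ring
    exact ⟨Ideal.Quotient.mk _ q, by rw [LinearMap.lsmul_apply, smul_mk_eq, hp]⟩
  · rintro ⟨y, hy⟩
    obtain ⟨q, rfl⟩ := Ideal.Quotient.mk_surjective y
    rw [LinearMap.lsmul_apply, smul_mk_eq] at hy
    rw [← hy, smul_mk_eq, Ideal.Quotient.eq_zero_iff_mem]
    have : (2 * tL - 1) * ((tL - 2) * q) = ((tL - 2) * (2 * tL - 1)) * q := by ring
    rw [this]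
    exact Ideal.mul_mem_right q _ (Ideal.subset_span rfl)
end
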